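/- Consider a 3-class diagnostic task (K = 3) with class counts c(1), c(2), c(3) ∈ ℕ summing to n > 0, largest count n_A, and second-largest count n_B (so c(k) ≤ n_B for every index other than a maximizing one). If the Robust Metric satisfies RM = 3 · (n_A − n_B) / n ≥ 1, then the plurality fraction satisfies n_A / n ≥ 5/9. -/
import Mathlib


open Finset

/-- 3-class case: if the Robust Metric `RM = 3 * (n_A - n_B) / n` is at least `1`,
then the plurality fraction `n_A / n` is at least `5/9`. -/
theorem medrdf_rm_three_class
    (c : Fin 3 → ℕ) (n : ℕ) (hn : n = ∑ k, c k) (hnpos : 0 < n)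
    (A : Fin 3) (nA nB : ℕ)
    (hA : c A = nA) (hmax : ∀ k, c k ≤ nA)
    (hB : ∀ k, k ≠ A → c k ≤ nB) (hBA : nB ≤ nA)
    (hRM : (3 : ℚ) * ((nA : ℚ) - nB) / n ≥ 1) :
    (nA : ℚ) / n ≥ 5 / 9 := by
  have hnq : (0:ℚ) < n := by exact_mod_cast hnpos
  have h1 : (3:ℚ) * ((nA:ℚ) - nB) ≥ n := by
    rw [ge_iff_le, le_div_iff₀ hnq] at hRM; linarith
  have h2 : n ≤ nA + 2 * nB := by
    rw [Fin.sum_univ_three] at hn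
    fin_cases A <;>
      simp only at hA <;>
      [ (have b1 := hB 1 (by decide); have b2 := hB 2 (by decide);
         have hA' : c 0 = nA := hA);
        (have b1 := hB 0 (by decide); have b2 := hB 2 (by decide);
         have hA' : c 1 = nA := hA);
        (have b1 := hB 0 (by decide); have b2 := hB 1 (by decide);
         have hA' : c 2 = nA := hA)] <;>
      omega
  have h2q : (n:ℚ) ≤ (nA:ℚ) + 2 * nB := by exact_mod_cast h2
  rw [ge_iff_le, div_le_div_iff₀ (by norm_num) hnq]
  linarith
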